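/- arXiv:math/0405364 — 3 statements merged into one kernel-verified Lean document; each statement's English description precedes it below -/
import Mathlib

section
/- Fix a point q0 ∈ RP^3. There is a homeomorphism Φ from the space {(x,y) ∈ RP^3 × RP^3 : x ≠ y} (the complement of the diagonal) onto RP^3 × (RP^3 \ {q0}) such that the first coordinate of Φ(x,y) equals x for every pair (x,y); in other words, the projection (x,y) ↦ x from the complement of the diagonal to RP^3 is a trivial fiber bundle with fiber RP^3 minus a point. -/
noncomputable section

/-- The unit sphere in `ℝ^n`. -/
abbrev Sph (n : ℕ) := Metric.sphere (0 : EuclideanSpace ℝ (Fin n)) 1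

/-- The antipodal equivalence relation on the unit sphere in `ℝ^n`. -/
def antipodalSetoid (n : ℕ) : Setoid (Sph n) where
  r x y := (x : EuclideanSpace ℝ (Fin n)) = y ∨ (x : EuclideanSpace ℝ (Fin n)) = -y
  iseqv := by
    constructor
    · intro x; exact Or.inl rfl
    · rintro x y (h | h)
      · exact Or.inl h.symm
      · exact Or.inr (by rw [h, neg_neg])
    · rintro x y z (h1 | h1) (h2 | h2)
      · exact Or.inl (by rw [h1, h2])
      · exact Or.inr (by rw [h1, h2])
      · exact Or.inr (by rw [h1, h2])
      · exact Or.inl (by rw [h1, h2, neg_neg])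

/-- Real projective `n`-space, as the quotient of the unit sphere in `ℝ^{n+1}`
by the antipodal involution, with the quotient topology. -/
abbrev RP (n : ℕ) := Quotient (antipodalSetoid (n + 1))

/-! The unit quaternions modulo `±1` form a topological group homeomorphic to `RP^3`, and in any
topological group `G` the map `(x, y) ↦ (x, q * x⁻¹ * y)` trivializes the complement of the
diagonal over the first factor, since `q * x⁻¹ * y = q` exactly when `y = x`. -/

open Metric

def HasTrivialDiagonalComplBundle (X : Type*) [TopologicalSpace X] : Prop :=
  ∀ q : X, ∃ Φ : {p : X × X // p.1 ≠ p.2} ≃ₜ X × {y : X // y ≠ q},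
    ∀ p : {p : X × X // p.1 ≠ p.2}, (Φ p).1 = (p : X × X).1

theorem HasTrivialDiagonalComplBundle.of_homeomorph {X Y : Type*} [TopologicalSpace X]
    [TopologicalSpace Y] (e : X ≃ₜ Y) (hY : HasTrivialDiagonalComplBundle Y) :
    HasTrivialDiagonalComplBundle X := by
  intro q
  obtain ⟨Φ, hΦ⟩ := hY (e q)
  let onDiagonalCompl : {p : X × X // p.1 ≠ p.2} ≃ₜ {p : Y × Y // p.1 ≠ p.2} :=
    (e.prodCongr e).subtype fun _ => e.injective.ne_iff.symm
  let onFiber : {y : Y // y ≠ e q} ≃ₜ {x : X // x ≠ q} :=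
    e.symm.subtype fun _ => (not_congr e.symm_apply_eq).symm
  refine ⟨(onDiagonalCompl.trans Φ).trans (e.symm.prodCongr onFiber), fun p => ?_⟩
  change e.symm (Φ (onDiagonalCompl p)).1 = _
  rw [hΦ, e.symm_apply_eq]
  rfl

theorem HasTrivialDiagonalComplBundle.of_isTopologicalGroup (G : Type*) [TopologicalSpace G]
    [Group G] [IsTopologicalGroup G] : HasTrivialDiagonalComplBundle G := by
  intro q
  have translate_eq_iff (a x y : G) : a * x⁻¹ * y = a ↔ y = x := by
    rw [mul_assoc, mul_eq_left, inv_mul_eq_one, eq_comm]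
  refine ⟨
    { toFun := fun p =>
        (p.1.1, ⟨q * p.1.1⁻¹ * p.1.2, fun h => p.2 ((translate_eq_iff ..).1 h).symm⟩)
      invFun := fun z =>
        ⟨(z.1, z.1 * q⁻¹ * z.2), fun h => z.2.2 ((translate_eq_iff ..).1 h.symm)⟩
      left_inv := fun p => by ext <;> simp [mul_assoc]
      right_inv := fun z => by ext <;> simp [mul_assoc]
      continuous_toFun := by fun_prop
      continuous_invFun := by fun_prop }, fun _ => rfl⟩

def signSubgroup (G : Type*) [Group G] [HasDistribNeg G] : Subgroup G where
  carrier := {1, -1}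
  one_mem' := Or.inl rfl
  mul_mem' := by
    rintro x y (rfl | rfl) (rfl | rfl) <;> simp
  inv_mem' := by
    rintro x (rfl | rfl) <;> simp

section signSubgroup

variable {G : Type*} [Group G] [HasDistribNeg G]

theorem mem_signSubgroup {x : G} : x ∈ signSubgroup G ↔ x = 1 ∨ x = -1 := Iff.rfl

instance signSubgroup.normal : (signSubgroup G).Normal where
  conj_mem x hx g := by
    rcases mem_signSubgroup.1 hx with rfl | rfl <;> simp [mem_signSubgroup]

theorem leftRel_signSubgroup_iff (x y : G) :
    QuotientGroup.leftRel (signSubgroup G) x y ↔ y = x ∨ y = -x := by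
  rw [QuotientGroup.leftRel_apply, mem_signSubgroup, inv_mul_eq_one, inv_mul_eq_iff_eq_mul,
    mul_neg_one, eq_comm (a := x)]

end signSubgroup

namespace LinearIsometryEquiv

variable {𝕜 E F : Type*} [NormedField 𝕜] [SeminormedAddCommGroup E] [SeminormedAddCommGroup F]
  [NormedSpace 𝕜 E] [NormedSpace 𝕜 F] (e : E ≃ₗᵢ[𝕜] F) (r : ℝ)

def sphereHomeomorph : sphere (0 : E) r ≃ₜ sphere (0 : F) r :=
  e.toHomeomorph.subtype fun _ => by simp

@[simp]
theorem coe_sphereHomeomorph (x : sphere (0 : E) r) : (e.sphereHomeomorph r x : F) = e x :=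
  rfl

end LinearIsometryEquiv

def rpHomeomorphSphereQuotient {n : ℕ} {𝕜 : Type*} [NormedDivisionRing 𝕜] [NormedSpace ℝ 𝕜]
    (e : EuclideanSpace ℝ (Fin (n + 1)) ≃ₗᵢ[ℝ] 𝕜) :
    RP n ≃ₜ sphere (0 : 𝕜) 1 ⧸ signSubgroup (sphere (0 : 𝕜) 1) :=
  Homeomorph.Quotient.congr (e.sphereHomeomorph 1) fun x y => by
    change (x : EuclideanSpace ℝ (Fin (n + 1))) = y ∨
      (x : EuclideanSpace ℝ (Fin (n + 1))) = -y ↔ _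
    simp only [leftRel_signSubgroup_iff, Subtype.ext_iff, coe_neg_sphere,
      LinearIsometryEquiv.coe_sphereHomeomorph, ← map_neg, e.injective.eq_iff]
    exact or_congr eq_comm (eq_comm.trans neg_eq_iff_eq_neg)

/-- Fix `q0 ∈ RP^3`. There is a homeomorphism from the complement of the diagonal in
`RP^3 × RP^3` onto `RP^3 × (RP^3 \ {q0})` commuting with the projection to the first
factor; i.e. the projection `(x,y) ↦ x` is a trivial bundle with fiber `RP^3` minus
a point. -/
theorem rp3_diagonal_complement_trivial_bundle (q0 : RP 3) :
    ∃ Φ : {p : RP 3 × RP 3 // p.1 ≠ p.2} ≃ₜ (RP 3) × {y : RP 3 // y ≠ q0},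
      ∀ p : {p : RP 3 × RP 3 // p.1 ≠ p.2}, (Φ p).1 = (p : RP 3 × RP 3).1 :=
  (HasTrivialDiagonalComplBundle.of_isTopologicalGroup _).of_homeomorph
    (rpHomeomorphSphereQuotient Quaternion.linearIsometryEquivTuple.symm) q0

end
end

section
/- The complement of the diagonal (RP^3 × RP^3) \ Δ is homotopy equivalent to the product RP^3 × RP^2. -/
noncomputable section

/-! The unit quaternions modulo `±1` form a topological group homeomorphic to `RP³`, and in a
topological group `(x, y) ↦ (x, x⁻¹ y)` identifies the complement of the diagonal with
`G × (G ∖ {1})`. It remains to see that `RP^{n+1}` minus the point `[e₀]` deformation retracts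
onto the hyperplane `RP^n = {x₀ = 0}`: shrink the `0`-th coordinate of a representative linearly
to `0` and renormalize. This never produces the zero vector, since the only unit vectors whose
other coordinates all vanish are `±e₀`, and it commutes with `v ↦ -v`. -/

open Metric Topology

local notation "ℝ^" n:max => EuclideanSpace ℝ (Fin n)

@[simp] theorem Topology.IsQuotientMap.lift_apply_apply {X Y Z : Type*} [TopologicalSpace X]
    [TopologicalSpace Y] [TopologicalSpace Z] {f : C(X, Y)} (hf : IsQuotientMap f) (g : C(X, Z))
    (h : Function.FactorsThrough g f) (x : X) : hf.lift g h (f x) = g x :=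
  DFunLike.congr_fun (hf.lift_comp g h) x

def Homeomorph.offDiag {X Y : Type*} [TopologicalSpace X] [TopologicalSpace Y] (e : X ≃ₜ Y) :
    {p : X × X // p.1 ≠ p.2} ≃ₜ {p : Y × Y // p.1 ≠ p.2} :=
  (e.prodCongr e).subtype fun _ => e.injective.ne_iff.symm

def offDiagHomeomorphProdNeOne (G : Type*) [Group G] [TopologicalSpace G] [IsTopologicalGroup G] :
    {p : G × G // p.1 ≠ p.2} ≃ₜ G × {g : G // g ≠ 1} where
  toFun p := (p.1.1, ⟨p.1.1⁻¹ * p.1.2, by simpa [inv_mul_eq_one] using p.2⟩)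
  invFun q := ⟨(q.1, q.1 * q.2), by simpa using q.2.2⟩
  left_inv p := by simp
  right_inv q := by simp
  continuous_toFun := by fun_prop
  continuous_invFun := by fun_prop

section SphereNormalize

variable {E : Type*} [NormedAddCommGroup E] [NormedSpace ℝ E]

def sphereNormalize (x : E) (hx : x ≠ 0) : sphere (0 : E) 1 :=
  ⟨‖x‖⁻¹ • x, by simp [norm_smul, hx]⟩

@[simp] theorem coe_sphereNormalize (x : E) (hx : x ≠ 0) :
    (sphereNormalize x hx : E) = ‖x‖⁻¹ • x := rfl

theorem Continuous.sphereNormalize {X : Type*} [TopologicalSpace X] {f : X → E}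
    (hf : Continuous f) (h : ∀ a, f a ≠ 0) : Continuous fun a => sphereNormalize (f a) (h a) :=
  ((hf.norm.inv₀ fun a => norm_ne_zero_iff.2 (h a)).smul hf).subtype_mk _

end SphereNormalize

namespace Metric.unitSphere

variable (𝕜 : Type*) [NormedDivisionRing 𝕜]

def signSubgroup : Subgroup (sphere (0 : 𝕜) 1) where
  carrier := {1, -1}
  one_mem' := Or.inl rfl
  mul_mem' := by rintro a b (rfl | rfl) (rfl | rfl) <;> simp
  inv_mem' := by rintro a (rfl | rfl) <;> simp

@[simp] theorem mem_signSubgroup {a : sphere (0 : 𝕜) 1} :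
    a ∈ signSubgroup 𝕜 ↔ a = 1 ∨ a = -1 :=
  Iff.rfl

instance : (signSubgroup 𝕜).Normal := ⟨by rintro _ (rfl | rfl) g <;> simp⟩

variable {𝕜} in
theorem mk_eq_mk_iff_signSubgroup {a b : sphere (0 : 𝕜) 1} :
    (a : sphere (0 : 𝕜) 1 ⧸ signSubgroup 𝕜) = b ↔ a = b ∨ a = -b := by
  rw [QuotientGroup.eq, mem_signSubgroup, inv_mul_eq_one, inv_mul_eq_iff_eq_mul, mul_neg_one,
    eq_comm (a := b), neg_eq_iff_eq_neg]

end Metric.unitSphere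

namespace EuclideanSpace

variable {n : ℕ}

def tail : ℝ^(n + 1) →L[ℝ] ℝ^n :=
  LinearMap.toContinuousLinearMap
    { toFun x := WithLp.toLp 2 fun i => x i.succ
      map_add' _ _ := rfl
      map_smul' _ _ := rfl }

@[simp] theorem tail_apply (x : ℝ^(n + 1)) (i : Fin n) :
    tail x i = x i.succ := rfl

def consZero : ℝ^n →ₗᵢ[ℝ] ℝ^(n + 1) where
  toFun w := WithLp.toLp 2 (Fin.cons 0 fun i => w i)
  map_add' w w' := by ext i; cases i using Fin.cases <;> simp
  map_smul' c w := by ext i; cases i using Fin.cases <;> simp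
  norm_map' w := by simp [EuclideanSpace.norm_eq, Fin.sum_univ_succ]

@[simp] theorem consZero_apply_zero (w : ℝ^n) : consZero w 0 = 0 := rfl

@[simp] theorem consZero_apply_succ (w : ℝ^n) (i : Fin n) :
    consZero w i.succ = w i := by
  simp [consZero]

@[simp] theorem tail_consZero (w : ℝ^n) : tail (consZero w) = w := by
  ext i; simp

@[simp] theorem tail_single_zero :
    tail (single 0 1 : ℝ^(n + 1)) = 0 := by
  ext i; simp

theorem apply_zero_smul_single_add_consZero_tail (x : ℝ^(n + 1)) :
    x 0 • single 0 1 + consZero (tail x) = x := by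
  ext i; cases i using Fin.cases <;> simp

def scaleZero (s : ℝ) (x : ℝ^(n + 1)) : ℝ^(n + 1) :=
  (s * x 0) • single 0 1 + consZero (tail x)

@[simp] theorem tail_scaleZero (s : ℝ) (x : ℝ^(n + 1)) :
    tail (scaleZero s x) = tail x := by
  simp [scaleZero]

theorem scaleZero_one (x : ℝ^(n + 1)) : scaleZero 1 x = x := by
  rw [scaleZero, one_mul, apply_zero_smul_single_add_consZero_tail]

theorem scaleZero_zero (x : ℝ^(n + 1)) :
    scaleZero 0 x = consZero (tail x) := by
  simp [scaleZero]

theorem scaleZero_neg (s : ℝ) (x : ℝ^(n + 1)) :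
    scaleZero s (-x) = -scaleZero s x := by
  simp only [scaleZero, map_neg, PiLp.neg_apply, mul_neg, neg_smul, neg_add]

theorem continuous_scaleZero :
    Continuous fun p : ℝ × ℝ^(n + 1) => scaleZero p.1 p.2 := by
  unfold scaleZero; fun_prop

end EuclideanSpace

namespace RP

open EuclideanSpace

variable {n : ℕ}

theorem mk_eq_mk_iff {a b : Sph (n + 1)} : (⟦a⟧ : RP n) = ⟦b⟧ ↔ a = b ∨ a = -b :=
  Quotient.eq.trans (or_congr Subtype.ext_iff.symm (Subtype.ext_iff (a2 := -b)).symm)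

variable (n) in
theorem isOpenQuotientMap_mk : IsOpenQuotientMap (Quotient.mk _ : Sph (n + 1) → RP n) := by
  refine ⟨Quotient.mk_surjective, continuous_quotient_mk', fun U hU => ?_⟩
  have saturation : (⟦·⟧ : Sph (n + 1) → RP n) ⁻¹' ((⟦·⟧ : Sph (n + 1) → RP n) '' U) =
      U ∪ Neg.neg ⁻¹' U := by
    ext v
    simp only [Set.mem_preimage, Set.mem_image, mk_eq_mk_iff, Set.mem_union]
    constructor
    · rintro ⟨u, hu, rfl | rfl⟩
      exacts [Or.inl hu, Or.inr hu]
    · rintro (hv | hv)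
      exacts [⟨v, hv, Or.inl rfl⟩, ⟨-v, hv, Or.inr rfl⟩]
  rw [← isQuotientMap_quotient_mk'.isOpen_preimage]
  exact saturation ▸ hU.union (hU.preimage continuous_neg)

variable (n) in
def basepoint : RP n := ⟦⟨single 0 1, by simp⟩⟧

theorem mk_eq_basepoint_iff {v : Sph (n + 2)} :
    (⟦v⟧ : RP (n + 1)) = basepoint (n + 1) ↔ tail (v : ℝ^(n + 2)) = 0 := by
  rw [basepoint, mk_eq_mk_iff]
  constructor
  · rintro (rfl | rfl) <;> simp
  · intro h
    have hv := apply_zero_smul_single_add_consZero_tail (v : ℝ^(n + 2))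
    rw [h, map_zero, add_zero] at hv
    have h1 : |(v : ℝ^(n + 2)) 0| = 1 := by
      have hnorm := norm_eq_of_mem_sphere v
      rwa [← hv, norm_smul, PiLp.norm_single, norm_one, mul_one, Real.norm_eq_abs] at hnorm
    rcases (abs_eq zero_le_one).1 h1 with h0 | h0
    · exact Or.inl (Subtype.ext (by rw [← hv, h0, one_smul]))
    · exact Or.inr (Subtype.ext (by rw [← hv, h0, neg_one_smul]; rfl))

end RP

def sphereHomeomorphUnitQuaternions : Sph 4 ≃ₜ sphere (0 : Quaternion ℝ) 1 :=
  Quaternion.linearIsometryEquivTuple.symm.toHomeomorph.subtype fun _ => by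
    simp only [mem_sphere_zero_iff_norm, LinearIsometryEquiv.coe_toHomeomorph,
      LinearIsometryEquiv.norm_map]

theorem sphereHomeomorphUnitQuaternions_neg (v : Sph 4) :
    sphereHomeomorphUnitQuaternions (-v) = -sphereHomeomorphUnitQuaternions v :=
  Subtype.ext (map_neg Quaternion.linearIsometryEquivTuple.symm _)

open Metric.unitSphere in
def rp3HomeomorphUnitQuaternionsModSign :
    RP 3 ≃ₜ sphere (0 : Quaternion ℝ) 1 ⧸ signSubgroup (Quaternion ℝ) :=
  Homeomorph.Quotient.congr sphereHomeomorphUnitQuaternions fun a b => by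
    rw [← Quotient.eq, RP.mk_eq_mk_iff, QuotientGroup.leftRel_apply, ← QuotientGroup.eq,
      mk_eq_mk_iff_signSubgroup, ← sphereHomeomorphUnitQuaternions_neg,
      sphereHomeomorphUnitQuaternions.injective.eq_iff,
      sphereHomeomorphUnitQuaternions.injective.eq_iff]

theorem rp3HomeomorphUnitQuaternionsModSign_basepoint :
    rp3HomeomorphUnitQuaternionsModSign (RP.basepoint 3) = 1 :=
  congrArg QuotientGroup.mk (Subtype.ext (by ext <;> rfl))

namespace RP

open EuclideanSpace

variable {n : ℕ}

abbrev Punctured (n : ℕ) := {q : RP (n + 1) // q ≠ basepoint (n + 1)}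

variable (n) in
def offPoles : Set (Sph (n + 2)) := (⟦·⟧ : Sph (n + 2) → RP (n + 1)) ⁻¹' {basepoint (n + 1)}ᶜ

variable (n) in
def puncturedMk : C(offPoles n, Punctured n) :=
  ⟨Set.restrictPreimage {basepoint (n + 1)}ᶜ (⟦·⟧ : Sph (n + 2) → RP (n + 1)),
    continuous_quotient_mk'.restrictPreimage⟩

theorem isOpenQuotientMap_puncturedMk : IsOpenQuotientMap (puncturedMk n) :=
  (isOpenQuotientMap_mk (n + 1)).restrictPreimage _

theorem mem_offPoles_iff {v : Sph (n + 2)} :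
    v ∈ offPoles n ↔ tail (v : ℝ^(n + 2)) ≠ 0 :=
  mk_eq_basepoint_iff.not

theorem tail_ne_zero (v : offPoles n) : tail (v : ℝ^(n + 2)) ≠ 0 :=
  mem_offPoles_iff.1 v.2

theorem puncturedMk_eq_iff {a b : offPoles n} :
    puncturedMk n a = puncturedMk n b ↔
      (a : ℝ^(n + 2)) = b ∨ (a : ℝ^(n + 2)) = -b :=
  Subtype.ext_iff.trans (mk_eq_mk_iff.trans (or_congr Subtype.ext_iff Subtype.ext_iff))

theorem factorsThrough_puncturedMk {Z : Type*} {g : offPoles n → Z}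
    (hg : ∀ a b : offPoles n, (a : ℝ^(n + 2)) = -b → g a = g b) :
    Function.FactorsThrough g (puncturedMk n) := by
  intro a b h
  rcases puncturedMk_eq_iff.1 h with h | h
  · rw [Subtype.ext (Subtype.ext h)]
  · exact hg a b h

variable (n) in
def retraction : C(Punctured n, RP n) :=
  isOpenQuotientMap_puncturedMk.isQuotientMap.lift
    ⟨fun v : offPoles n => ⟦sphereNormalize (tail (v : ℝ^(n + 2))) (tail_ne_zero v)⟧,
      continuous_quotient_mk'.comp <| Continuous.sphereNormalize (by fun_prop) _⟩
    (factorsThrough_puncturedMk fun a b h =>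
      mk_eq_mk_iff.2 (Or.inr (Subtype.ext (by simp [h]))))

theorem retraction_puncturedMk (v : offPoles n) :
    retraction n (puncturedMk n v) =
      ⟦sphereNormalize (tail (v : ℝ^(n + 2))) (tail_ne_zero v)⟧ := by
  unfold retraction
  exact IsQuotientMap.lift_apply_apply _ _ _ v

def consZeroSphere (w : Sph (n + 1)) : Sph (n + 2) :=
  ⟨consZero (w : ℝ^(n + 1)), by simp⟩

theorem continuous_consZeroSphere : Continuous (consZeroSphere (n := n)) :=
  (consZero.continuous.comp continuous_subtype_val).subtype_mk _

theorem consZeroSphere_mem_offPoles (w : Sph (n + 1)) : consZeroSphere w ∈ offPoles n :=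
  mem_offPoles_iff.2 (by simpa [consZeroSphere] using ne_zero_of_mem_unit_sphere w)

variable (n) in
def inclusion : C(RP n, Punctured n) :=
  ⟨Quotient.lift (fun w => puncturedMk n ⟨consZeroSphere w, consZeroSphere_mem_offPoles w⟩)
      fun a b h => by
        rcases h with h | h
        · rw [Subtype.ext h]
        · exact puncturedMk_eq_iff.2 (Or.inr (by simp [consZeroSphere, h])),
    (puncturedMk n).continuous.comp (continuous_consZeroSphere.subtype_mk _) |>.quotient_lift _⟩

theorem retraction_comp_inclusion :
    (retraction n).comp (inclusion n) = ContinuousMap.id (RP n) := by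
  ext w
  induction w using Quotient.ind with | _ w =>
  exact (retraction_puncturedMk _).trans
    (congrArg _ (Subtype.ext (by simp [consZeroSphere, norm_eq_of_mem_sphere w])))

theorem scaleZero_ne_zero (s : ℝ) (v : offPoles n) :
    scaleZero s (v : ℝ^(n + 2)) ≠ 0 :=
  fun h => tail_ne_zero v (by rw [← tail_scaleZero s, h, map_zero])

theorem sphereNormalize_scaleZero_mem_offPoles (s : ℝ) (v : offPoles n) :
    sphereNormalize (scaleZero s (v : ℝ^(n + 2))) (scaleZero_ne_zero s v) ∈ offPoles n :=
  mem_offPoles_iff.2 <| by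
    simpa using smul_ne_zero (inv_ne_zero (norm_ne_zero_iff.2 (scaleZero_ne_zero s v)))
      (tail_ne_zero v)

def deformationOnSphere (t : unitInterval) (v : offPoles n) : offPoles n :=
  ⟨sphereNormalize (scaleZero (1 - t) (v : ℝ^(n + 2))) (scaleZero_ne_zero _ v),
    sphereNormalize_scaleZero_mem_offPoles _ v⟩

theorem continuous_deformationOnSphere :
    Continuous fun p : unitInterval × offPoles n => deformationOnSphere p.1 p.2 := by
  refine Continuous.subtype_mk (Continuous.sphereNormalize ?_ _) _
  exact continuous_scaleZero.comp
    (f := fun p : unitInterval × offPoles n => (1 - (p.1 : ℝ), (p.2 : ℝ^(n + 2)))) (by fun_prop)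

theorem deformationOnSphere_zero (v : offPoles n) : deformationOnSphere 0 v = v :=
  Subtype.ext (Subtype.ext (by simp [deformationOnSphere, scaleZero_one, norm_eq_of_mem_sphere]))

theorem deformationOnSphere_one (v : offPoles n) :
    (deformationOnSphere 1 v : Sph (n + 2)) =
      consZeroSphere (sphereNormalize (tail (v : ℝ^(n + 2))) (tail_ne_zero v)) :=
  Subtype.ext (by simp [deformationOnSphere, consZeroSphere, scaleZero_zero])

variable (n) in
def deformation : C(unitInterval × Punctured n, Punctured n) :=
  (IsOpenQuotientMap.id.prodMap isOpenQuotientMap_puncturedMk).isQuotientMap.lift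
    (f := (ContinuousMap.id unitInterval).prodMap (puncturedMk n))
    ⟨fun p => puncturedMk n (deformationOnSphere p.1 p.2),
      (puncturedMk n).continuous.comp continuous_deformationOnSphere⟩
    (by
      rintro ⟨t, a⟩ ⟨t', b⟩ h
      obtain ⟨rfl, h⟩ := Prod.ext_iff.1 h
      refine factorsThrough_puncturedMk (g := fun v => puncturedMk n (deformationOnSphere t v))
        (fun a b h => puncturedMk_eq_iff.2 (Or.inr ?_)) h
      simp [deformationOnSphere, h, scaleZero_neg])

theorem deformation_puncturedMk (t : unitInterval) (v : offPoles n) :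
    deformation n (t, puncturedMk n v) = puncturedMk n (deformationOnSphere t v) := by
  unfold deformation
  exact IsQuotientMap.lift_apply_apply _ _ _ (t, v)

variable (n) in
def deformationRetraction :
    (ContinuousMap.id (Punctured n)).Homotopy ((inclusion n).comp (retraction n)) where
  toContinuousMap := deformation n
  map_zero_left x := by
    obtain ⟨v, rfl⟩ := isOpenQuotientMap_puncturedMk.surjective x
    change deformation n (0, puncturedMk n v) = puncturedMk n v
    rw [deformation_puncturedMk, deformationOnSphere_zero]
  map_one_left x := by
    obtain ⟨v, rfl⟩ := isOpenQuotientMap_puncturedMk.surjective x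
    change deformation n (1, puncturedMk n v) = inclusion n (retraction n (puncturedMk n v))
    rw [deformation_puncturedMk, retraction_puncturedMk]
    exact congrArg _ (Subtype.ext (deformationOnSphere_one v))

variable (n) in
def puncturedHomotopyEquiv : ContinuousMap.HomotopyEquiv (Punctured n) (RP n) where
  toFun := retraction n
  invFun := inclusion n
  left_inv := ⟨(deformationRetraction n).symm⟩
  right_inv := by rw [retraction_comp_inclusion]

end RP

/-- The complement of the diagonal `(RP^3 × RP^3) \ Δ` is homotopy equivalent to the
product `RP^3 × RP^2`. -/
theorem rp3_diagonal_complement_homotopyEquiv :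
    Nonempty
      (ContinuousMap.HomotopyEquiv {p : RP 3 × RP 3 // p.1 ≠ p.2} ((RP 3) × (RP 2))) := by
  let e := rp3HomeomorphUnitQuaternionsModSign
  have e_punctured :
      {g : sphere (0 : Quaternion ℝ) 1 ⧸ unitSphere.signSubgroup (Quaternion ℝ) // g ≠ 1} ≃ₜ
        RP.Punctured 2 :=
    e.symm.subtype fun g => not_congr <| by
      rw [e.symm_apply_eq, rp3HomeomorphUnitQuaternionsModSign_basepoint]
  exact ⟨(e.offDiag.trans ((offDiagHomeomorphProdNeOne _).trans
    (e.symm.prodCongr e_punctured))).toHomotopyEquiv.trans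
    ((ContinuousMap.HomotopyEquiv.refl _).prodCongr (RP.puncturedHomotopyEquiv 2))⟩
end
end

section
/- Let C_1 and C_2 be two disjoint embedded circles in RP^3, and let K_1 = {(x,t,y) ∈ C_1 × RP^3 × C_2 : t ∈ Span(x,y)}. The projection π : K_1 → C_1 × C_2 defined by π(x,t,y) = (x,y) is a locally trivial fibration with fiber the circle: every point of C_1 × C_2 has an open neighborhood U and a homeomorphism h : π^{-1}(U) → U × S^1 such that the first coordinate of h equals π on π^{-1}(U). -/
noncomputable section

/-- The projective line through two points of `RP^3`: the set of points represented by
nonzero vectors of the linear span of representatives. -/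
def projSpan (x y : RP 3) : Set (RP 3) :=
  {t | ∃ u v w : Sph 4,
    Quotient.mk (antipodalSetoid 4) u = x ∧
    Quotient.mk (antipodalSetoid 4) v = y ∧
    Quotient.mk (antipodalSetoid 4) w = t ∧
    (w : EuclideanSpace ℝ (Fin 4)) ∈
      Submodule.span ℝ ({(u : EuclideanSpace ℝ (Fin 4)),
        (v : EuclideanSpace ℝ (Fin 4))} : Set (EuclideanSpace ℝ (Fin 4)))}


/-- The configuration space `K₁ = {(x,t,y) ∈ C₁ × RP^3 × C₂ : t ∈ Span(x,y)}` for two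
subsets `C₁, C₂ ⊆ RP^3`, as a subspace of `C₁ × RP^3 × C₂`. -/
abbrev LinkConfig (C₁ C₂ : Set (RP 3)) : Type :=
  {p : C₁ × RP 3 × C₂ // p.2.1 ∈ projSpan (p.1 : RP 3) (p.2.2 : RP 3)}

/-
Near a base point, `x ∈ C₁` and `y ∈ C₂` have continuous lifts `u(x), v(y)` to `S³`, since the
antipodal quotient is injective on balls of radius `1`. As `x ≠ y`, Gram–Schmidt turns `(u, v)`
into a continuous orthonormal frame `(e₁, e₂)` of the plane `Span(x, y)`. The point
`[a e₁ + b e₂]` of the line goes to `(a + b i)² ∈ S¹`, which forgets the sign of the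
representative and is a bijection from the line onto `S¹`. Both directions are continuous
because they lift through quotient maps (`S³ → RP³`, and squaring `S¹ → S¹`, a surjection from a
compact space) multiplied by the compact space of orthonormal frames.
-/

open scoped RealInnerProductSpace
open Metric Set Topology

local notation "mkRP" => Quotient.mk (antipodalSetoid _)
local notation "ℝ^" n => EuclideanSpace ℝ (Fin n)

section GramSchmidt

variable {E : Type*} [NormedAddCommGroup E] [InnerProductSpace ℝ E]

def gramSchmidtSnd (u v : E) : E := ‖v - ⟪u, v⟫ • u‖⁻¹ • (v - ⟪u, v⟫ • u)

theorem sub_inner_smul_ne_zero {u v : E} (hu : ‖u‖ = 1) (hv : ‖v‖ = 1) (hvu : v ≠ u)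
    (hvu' : v ≠ -u) : v - ⟪u, v⟫ • u ≠ 0 := by
  intro h
  rw [sub_eq_zero] at h
  have habs : |⟪u, v⟫| = 1 := by simpa [hu, hv, norm_smul] using (congrArg norm h).symm
  rcases abs_eq zero_le_one |>.1 habs with h1 | h1
  · exact hvu (by rw [h, h1, one_smul])
  · exact hvu' (by rw [h, h1, neg_one_smul])

theorem norm_gramSchmidtSnd {u v : E} (h : v - ⟪u, v⟫ • u ≠ 0) : ‖gramSchmidtSnd u v‖ = 1 :=
  norm_smul_inv_norm h

theorem inner_gramSchmidtSnd {u : E} (hu : ‖u‖ = 1) (v : E) : ⟪u, gramSchmidtSnd u v⟫ = 0 := by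
  simp [gramSchmidtSnd, inner_smul_right, inner_sub_right, hu]

theorem span_gramSchmidtSnd {u v : E} (h : v - ⟪u, v⟫ • u ≠ 0) :
    Submodule.span ℝ {u, gramSchmidtSnd u v} = Submodule.span ℝ {u, v} := by
  have hv : ⟪u, v⟫ • u + ‖v - ⟪u, v⟫ • u‖ • gramSchmidtSnd u v = v := by
    rw [gramSchmidtSnd, smul_smul, mul_inv_cancel₀ (norm_ne_zero_iff.2 h), one_smul]
    abel
  apply le_antisymm <;>
    rw [Submodule.span_le, insert_subset_iff, singleton_subset_iff] <;>
    refine ⟨Submodule.subset_span (.inl rfl), ?_⟩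
  · exact Submodule.smul_mem _ _ (Submodule.sub_mem _ (Submodule.subset_span (.inr rfl))
      (Submodule.smul_mem _ _ (Submodule.subset_span (.inl rfl))))
  · have hmem := Submodule.add_mem (Submodule.span ℝ {u, gramSchmidtSnd u v})
      (Submodule.smul_mem _ ⟪u, v⟫ (Submodule.subset_span (.inl rfl)))
      (Submodule.smul_mem _ ‖v - ⟪u, v⟫ • u‖ (Submodule.subset_span (.inr rfl)))
    rwa [hv] at hmem

theorem Continuous.gramSchmidtSnd {X : Type*} [TopologicalSpace X] {u v : X → E}
    (hu : Continuous u) (hv : Continuous v) (h : ∀ x, v x - ⟪u x, v x⟫ • u x ≠ 0) :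
    Continuous fun x => _root_.gramSchmidtSnd (u x) (v x) := by
  have hw : Continuous fun x => v x - ⟪u x, v x⟫ • u x := hv.sub ((hu.inner hv).smul hu)
  exact (hw.norm.inv₀ fun x => norm_ne_zero_iff.2 (h x)).smul hw

end GramSchmidt

section Projective

variable {n : ℕ}

theorem mkRP_eq_mkRP_iff {u v : Sph (n + 1)} :
    mkRP u = mkRP v ↔ (u : ℝ^(n + 1)) = v ∨ (u : ℝ^(n + 1)) = -(v : ℝ^(n + 1)) :=
  ⟨Quotient.exact, fun h => Quotient.sound h⟩

theorem mkRP_neg (u : Sph (n + 1)) : mkRP (-u) = mkRP u :=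
  Quotient.sound (Or.inr rfl)

theorem isOpenMap_mkRP : IsOpenMap (mkRP : Sph (n + 1) → RP n) := by
  intro s hs
  have : mkRP ⁻¹' (mkRP '' s) = s ∪ Neg.neg ⁻¹' s := by
    ext u
    simp only [mem_preimage, mem_image, mem_union]
    constructor
    · rintro ⟨v, hv, hvu⟩
      rcases mkRP_eq_mkRP_iff.1 hvu with h | h
      · exact .inl (Subtype.ext h ▸ hv)
      · exact .inr (by rwa [show -u = v from Subtype.ext (by simp [h])])
    · rintro (h | h)
      · exact ⟨u, h, rfl⟩
      · exact ⟨-u, h, mkRP_neg u⟩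
  show IsOpen (mkRP ⁻¹' (mkRP '' s))
  rw [this]
  exact hs.union (hs.preimage continuous_neg)

theorem injOn_mkRP_ball (u₀ : Sph (n + 1)) :
    InjOn (mkRP : Sph (n + 1) → RP n) (ball u₀ 1) := by
  intro u hu v hv huv
  rcases mkRP_eq_mkRP_iff.1 huv with h | h
  · exact Subtype.ext h
  · have huv : dist u v = 2 := by
      rw [Subtype.dist_eq, dist_eq_norm, h, ← neg_add', norm_neg, ← two_smul ℝ, norm_smul,
        norm_eq_of_mem_sphere v]
      norm_num
    have := dist_triangle u u₀ v
    rw [mem_ball] at hu hv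
    rw [dist_comm u₀] at this
    linarith

def rpChart (u₀ : Sph (n + 1)) : OpenPartialHomeomorph (Sph (n + 1)) (RP n) :=
  haveI : Nonempty (Sph (n + 1)) := ⟨u₀⟩
  .ofContinuousOpen ((injOn_mkRP_ball u₀).toPartialEquiv _ _)
    continuous_quotient_mk'.continuousOn isOpenMap_mkRP isOpen_ball

theorem mkRP_mem_rpChart_target (u₀ : Sph (n + 1)) : mkRP u₀ ∈ (rpChart u₀).target :=
  (rpChart u₀).map_source (mem_ball_self one_pos)

theorem mkRP_rpChart_symm {u₀ : Sph (n + 1)} {x : RP n} (hx : x ∈ (rpChart u₀).target) :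
    mkRP ((rpChart u₀).symm x) = x :=
  (rpChart u₀).right_inv hx

theorem sub_inner_smul_ne_zero_of_mkRP_ne {u v : Sph (n + 1)} (h : mkRP u ≠ mkRP v) :
    (v : ℝ^(n + 1)) - ⟪(u : ℝ^(n + 1)), v⟫ • (u : ℝ^(n + 1)) ≠ 0 :=
  sub_inner_smul_ne_zero (norm_eq_of_mem_sphere u) (norm_eq_of_mem_sphere v)
    (fun h' => h (mkRP_eq_mkRP_iff.2 (.inl h'.symm)))
    (fun h' => h (mkRP_eq_mkRP_iff.2 (.inr (by rw [h', neg_neg]))))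

def projSubspace (S : Submodule ℝ (ℝ^(n + 1))) : Set (RP n) :=
  mkRP '' {w | (w : ℝ^(n + 1)) ∈ S}

theorem mem_of_mkRP_eq {S : Submodule ℝ (ℝ^(n + 1))} {u v : Sph (n + 1)} (h : mkRP u = mkRP v)
    (hv : (v : ℝ^(n + 1)) ∈ S) : (u : ℝ^(n + 1)) ∈ S := by
  rcases mkRP_eq_mkRP_iff.1 h with h | h <;> rw [h]
  exacts [hv, S.neg_mem hv]

theorem mkRP_mem_projSubspace {S : Submodule ℝ (ℝ^(n + 1))} {w : Sph (n + 1)} :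
    mkRP w ∈ projSubspace S ↔ (w : ℝ^(n + 1)) ∈ S :=
  ⟨fun ⟨_, hv, h⟩ => mem_of_mkRP_eq h.symm hv, fun hw => ⟨w, hw, rfl⟩⟩

theorem projSpan_mkRP (u v : Sph 4) :
    projSpan (mkRP u) (mkRP v) = projSubspace (Submodule.span ℝ {(u : ℝ^4), (v : ℝ^4)}) := by
  ext t
  obtain ⟨w, rfl⟩ := Quotient.exists_rep t
  rw [mkRP_mem_projSubspace]
  constructor
  · rintro ⟨u', v', w', hu, hv, hw, hspan⟩
    have hle : Submodule.span ℝ {(u' : ℝ^4), (v' : ℝ^4)} ≤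
        Submodule.span ℝ {(u : ℝ^4), (v : ℝ^4)} := by
      rw [Submodule.span_le, insert_subset_iff, singleton_subset_iff]
      exact ⟨mem_of_mkRP_eq hu (Submodule.subset_span (.inl rfl)),
        mem_of_mkRP_eq hv (Submodule.subset_span (.inr rfl))⟩
    exact mem_of_mkRP_eq hw.symm (hle hspan)
  · exact fun hw => ⟨u, v, w, rfl, rfl, rfl, hw⟩

end Projective

section CircleSq

/-- Identifies `Sph 2` with the unit complex numbers. -/
def complexToPlane : ℂ ≃ₗᵢ[ℝ] ℝ^2 := Complex.orthonormalBasisOneI.repr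

def circleSq (z : Sph 2) : Sph 2 :=
  ⟨complexToPlane ((complexToPlane.symm z) ^ 2), by simp [norm_eq_of_mem_sphere z]⟩

theorem continuous_circleSq : Continuous circleSq := by
  unfold circleSq; fun_prop

theorem circleSq_surjective : Function.Surjective circleSq := by
  intro z
  obtain ⟨ζ, hζ⟩ := IsAlgClosed.exists_pow_nat_eq (complexToPlane.symm z) two_pos
  have hnorm : ‖complexToPlane ζ‖ = 1 := by
    have := congrArg norm hζ
    simp only [norm_pow, LinearIsometryEquiv.norm_map, norm_eq_of_mem_sphere z] at this
    simpa using (pow_eq_one_iff_of_nonneg (norm_nonneg ζ) two_ne_zero).1 this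
  exact ⟨⟨_, mem_sphere_zero_iff_norm.2 hnorm⟩, Subtype.ext (by simp [circleSq, hζ])⟩

theorem eq_or_eq_neg_of_circleSq_eq {z z' : Sph 2} (h : circleSq z = circleSq z') :
    z = z' ∨ z = -z' := by
  have h' := congrArg (fun w : Sph 2 => complexToPlane.symm w) h
  simp only [circleSq, LinearIsometryEquiv.symm_apply_apply] at h'
  rcases sq_eq_sq_iff_eq_or_eq_neg.1 h' with h' | h'
  · exact .inl (Subtype.ext (by simpa using congrArg complexToPlane h'))
  · exact .inr (Subtype.ext (by simpa using congrArg complexToPlane h'))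

theorem isQuotientMap_circleSq : IsQuotientMap circleSq :=
  .of_surjective_continuous circleSq_surjective continuous_circleSq

end CircleSq

/-- The Stiefel manifold `V₂(ℝ^m)` of orthonormal pairs. -/
abbrev OrthoFrame (m : ℕ) := {f : Sph m × Sph m // ⟪(f.1 : ℝ^m), (f.2 : ℝ^m)⟫ = 0}

instance (m : ℕ) : CompactSpace (OrthoFrame m) :=
  isCompact_iff_compactSpace.1 (isClosed_eq (by fun_prop) continuous_const).isCompact

namespace OrthoFrame

variable {m : ℕ} (f : OrthoFrame m)

def plane : Submodule ℝ (ℝ^m) := Submodule.span ℝ {(f.1.1 : ℝ^m), (f.1.2 : ℝ^m)}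

def emb (ζ : ℂ) : ℝ^m := ζ.re • (f.1.1 : ℝ^m) + ζ.im • (f.1.2 : ℝ^m)

def coord (w : ℝ^m) : ℂ := (⟪(f.1.1 : ℝ^m), w⟫ : ℂ) + (⟪(f.1.2 : ℝ^m), w⟫ : ℂ) * Complex.I

theorem emb_mem_plane (ζ : ℂ) : f.emb ζ ∈ f.plane :=
  Submodule.add_mem _ (Submodule.smul_mem _ _ (Submodule.subset_span (.inl rfl)))
    (Submodule.smul_mem _ _ (Submodule.subset_span (.inr rfl)))

theorem coord_neg (w : ℝ^m) : f.coord (-w) = -f.coord w := by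
  simp only [coord, inner_neg_right, Complex.ofReal_neg]
  ring

theorem coord_emb (ζ : ℂ) : f.coord (f.emb ζ) = ζ := by
  have h₂₁ : ⟪(f.1.2 : ℝ^m), (f.1.1 : ℝ^m)⟫ = 0 := by rw [real_inner_comm]; exact f.2
  apply Complex.ext <;>
    simp [coord, emb, inner_add_right, inner_smul_right,
      norm_eq_of_mem_sphere, f.2, h₂₁]

theorem emb_coord {w : ℝ^m} (hw : w ∈ f.plane) : f.emb (f.coord w) = w := by
  obtain ⟨a, b, rfl⟩ := Submodule.mem_span_pair.1 hw
  have := f.coord_emb ⟨a, b⟩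
  rw [emb] at this ⊢
  rw [this]

theorem norm_emb (ζ : ℂ) : ‖f.emb ζ‖ = ‖ζ‖ := by
  rw [← sq_eq_sq₀ (norm_nonneg _) (norm_nonneg _), emb, norm_add_sq_real, norm_smul, norm_smul,
    inner_smul_left, inner_smul_right, f.2, norm_eq_of_mem_sphere, norm_eq_of_mem_sphere,
    Complex.sq_norm, Complex.normSq_apply]
  simp only [Real.norm_eq_abs, mul_one, mul_zero, conj_trivial]
  ring_nf
  rw [sq_abs, sq_abs]

theorem continuous_emb : Continuous fun p : OrthoFrame m × ℂ => p.1.emb p.2 := by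
  unfold emb; fun_prop

theorem continuous_coord : Continuous fun p : OrthoFrame m × ℝ^m => p.1.coord p.2 := by
  unfold coord; fun_prop

def point (z : Sph 2) : Sph m :=
  ⟨f.emb (complexToPlane.symm z), by simp [norm_emb, norm_eq_of_mem_sphere z]⟩

theorem point_neg (z : Sph 2) : f.point (-z) = -f.point z := by
  apply Subtype.ext
  simp [point, emb]
  abel

def gramSchmidt (u v : Sph m) (h : (v : ℝ^m) - ⟪(u : ℝ^m), v⟫ • (u : ℝ^m) ≠ 0) : OrthoFrame m :=
  ⟨(u, ⟨gramSchmidtSnd u v, mem_sphere_zero_iff_norm.2 (norm_gramSchmidtSnd h)⟩),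
    inner_gramSchmidtSnd (norm_eq_of_mem_sphere u) _⟩

theorem plane_gramSchmidt {u v : Sph m} (h : (v : ℝ^m) - ⟪(u : ℝ^m), v⟫ • (u : ℝ^m) ≠ 0) :
    (gramSchmidt u v h).plane = Submodule.span ℝ {(u : ℝ^m), (v : ℝ^m)} :=
  span_gramSchmidtSnd h

theorem continuous_gramSchmidt {X : Type*} [TopologicalSpace X] {u v : X → Sph m}
    (hu : Continuous u) (hv : Continuous v)
    (h : ∀ x, (v x : ℝ^m) - ⟪(u x : ℝ^m), v x⟫ • (u x : ℝ^m) ≠ 0) :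
    Continuous fun x => gramSchmidt (u x) (v x) (h x) :=
  (hu.prodMk (((continuous_subtype_val.comp hu).gramSchmidtSnd
    (continuous_subtype_val.comp hv) h).subtype_mk _)).subtype_mk _

end OrthoFrame

section FrameTrivialization

variable {n : ℕ}

def lineCoord (p : OrthoFrame (n + 1) × RP n) : ℝ^2 :=
  Quotient.liftOn p.2 (fun w => complexToPlane (p.1.coord w ^ 2)) (by
    rintro u v (h | h) <;> simp only [h, OrthoFrame.coord_neg, neg_sq])

theorem continuous_lineCoord : Continuous (lineCoord (n := n)) :=
  isQuotientMap_quotient_mk'.continuous_lift_prod_right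
    (complexToPlane.continuous.comp ((OrthoFrame.continuous_coord.comp
      (continuous_fst.prodMk (continuous_subtype_val.comp continuous_snd))).pow 2))

theorem norm_lineCoord {f : OrthoFrame (n + 1)} {t : RP n} (ht : t ∈ projSubspace f.plane) :
    ‖lineCoord (f, t)‖ = 1 := by
  obtain ⟨w, hw, rfl⟩ := ht
  have := f.norm_emb (f.coord w)
  rw [f.emb_coord hw, norm_eq_of_mem_sphere] at this
  simp [lineCoord, ← this]

def linePoint (p : OrthoFrame (n + 1) × Sph 2) : RP n :=
  mkRP (p.1.point (Function.surjInv circleSq_surjective p.2))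

theorem linePoint_circleSq (f : OrthoFrame (n + 1)) (z : Sph 2) :
    linePoint (f, circleSq z) = mkRP (f.point z) := by
  rcases eq_or_eq_neg_of_circleSq_eq (Function.surjInv_eq circleSq_surjective (circleSq z))
    with h | h
  · rw [linePoint, h]
  · rw [linePoint, h, f.point_neg, mkRP_neg]

theorem continuous_linePoint : Continuous (linePoint (n := n)) := by
  refine isQuotientMap_circleSq.continuous_lift_prod_right ?_
  simp only [linePoint_circleSq]
  refine continuous_quotient_mk'.comp (Continuous.subtype_mk ?_ _)
  exact OrthoFrame.continuous_emb.comp (continuous_fst.prodMk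
    (complexToPlane.symm.continuous.comp (continuous_subtype_val.comp continuous_snd)))

theorem linePoint_mem_projSubspace (f : OrthoFrame (n + 1)) (z : Sph 2) :
    linePoint (f, z) ∈ projSubspace f.plane :=
  mkRP_mem_projSubspace.2 (f.emb_mem_plane _)

theorem lineCoord_linePoint (f : OrthoFrame (n + 1)) (z : Sph 2) :
    lineCoord (f, linePoint (f, z)) = z := by
  obtain ⟨r, rfl⟩ := circleSq_surjective z
  rw [linePoint_circleSq]
  simp [lineCoord, OrthoFrame.point, OrthoFrame.coord_emb, circleSq]

theorem linePoint_lineCoord {f : OrthoFrame (n + 1)} {t : RP n} (ht : t ∈ projSubspace f.plane) :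
    linePoint (f, ⟨lineCoord (f, t), mem_sphere_zero_iff_norm.2 (norm_lineCoord ht)⟩) = t := by
  obtain ⟨w, hw, rfl⟩ := ht
  have hnorm : ‖complexToPlane (f.coord w)‖ = 1 := by
    rw [LinearIsometryEquiv.norm_map, ← f.norm_emb, f.emb_coord hw, norm_eq_of_mem_sphere]
  have hsq : (⟨lineCoord (f, mkRP w),
      mem_sphere_zero_iff_norm.2 (norm_lineCoord ⟨w, hw, rfl⟩)⟩ : Sph 2) =
      circleSq ⟨_, mem_sphere_zero_iff_norm.2 hnorm⟩ :=
    Subtype.ext (by simp [lineCoord, circleSq])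
  rw [hsq, linePoint_circleSq]
  congr 1
  exact Subtype.ext (by simp [OrthoFrame.point, f.emb_coord hw])

def frameTrivialization {B : Type*} [TopologicalSpace B] {F : B → OrthoFrame (n + 1)}
    (hF : Continuous F) {L : B → Set (RP n)} (hL : ∀ b, L b = projSubspace (F b).plane) :
    {p : B × RP n // p.2 ∈ L p.1} ≃ₜ B × Sph 2 where
  toFun p := (p.1.1, ⟨lineCoord (F p.1.1, p.1.2),
    mem_sphere_zero_iff_norm.2 (norm_lineCoord (hL p.1.1 ▸ p.2))⟩)
  invFun q := ⟨(q.1, linePoint (F q.1, q.2)), (hL q.1).symm ▸ linePoint_mem_projSubspace _ _⟩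
  left_inv p := Subtype.ext (Prod.ext rfl (linePoint_lineCoord (hL p.1.1 ▸ p.2)))
  right_inv q := Prod.ext rfl (Subtype.ext (lineCoord_linePoint _ _))
  continuous_toFun := by
    refine (continuous_fst.comp continuous_subtype_val).prodMk (Continuous.subtype_mk ?_ _)
    exact continuous_lineCoord.comp ((hF.comp (continuous_fst.comp continuous_subtype_val)).prodMk
      (continuous_snd.comp continuous_subtype_val))
  continuous_invFun :=
    (continuous_fst.prodMk (continuous_linePoint.comp ((hF.comp continuous_fst).prodMk
      continuous_snd))).subtype_mk _

end FrameTrivialization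

section LinkConfig

variable {C₁ C₂ : Set (RP 3)}

def linkConfigRestrictHomeo (U : Set (C₁ × C₂)) :
    {k : LinkConfig C₁ C₂ // (k.1.1, k.1.2.2) ∈ U} ≃ₜ
      {p : U × RP 3 // p.2 ∈ projSpan p.1.1.1 p.1.1.2} where
  toFun k := ⟨(⟨(k.1.1.1, k.1.1.2.2), k.2⟩, k.1.1.2.1), k.1.2⟩
  invFun p := ⟨⟨(p.1.1.1.1, p.1.2, p.1.1.1.2), p.2⟩, p.1.1.2⟩
  left_inv _ := rfl
  right_inv _ := rfl
  continuous_toFun := by fun_prop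
  continuous_invFun := by fun_prop

variable (u₀ v₀ : Sph 4)

/-- A neighbourhood of `([u₀], [v₀])` on which both points have continuous lifts to `S³`. -/
def chartDomain : Set (C₁ × C₂) :=
  {q | (q.1 : RP 3) ∈ (rpChart u₀).target ∧ (q.2 : RP 3) ∈ (rpChart v₀).target}

theorem isOpen_chartDomain : IsOpen (chartDomain (C₁ := C₁) (C₂ := C₂) u₀ v₀) :=
  ((rpChart u₀).open_target.preimage (by fun_prop)).inter
    ((rpChart v₀).open_target.preimage (by fun_prop))

theorem exists_linkConfig_trivialization (hC : Disjoint C₁ C₂)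
    (b : C₁ × C₂) :
    ∃ U : Set (C₁ × C₂), IsOpen U ∧ b ∈ U ∧
      ∃ h : {k : LinkConfig C₁ C₂ // (k.1.1, k.1.2.2) ∈ U} ≃ₜ U × Sph 2,
        ∀ k, ((h k).1 : C₁ × C₂) = (k.1.1.1, k.1.1.2.2) := by
  obtain ⟨u₀, hu₀⟩ := Quotient.exists_rep (b.1 : RP 3)
  obtain ⟨v₀, hv₀⟩ := Quotient.exists_rep (b.2 : RP 3)
  set U := chartDomain (C₁ := C₁) (C₂ := C₂) u₀ v₀
  let lift₁ (q : U) : Sph 4 := (rpChart u₀).symm q.1.1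
  let lift₂ (q : U) : Sph 4 := (rpChart v₀).symm q.1.2
  have hlift₁ (q : U) : mkRP (lift₁ q) = q.1.1 := mkRP_rpChart_symm q.2.1
  have hlift₂ (q : U) : mkRP (lift₂ q) = q.1.2 := mkRP_rpChart_symm q.2.2
  have hne (q : U) : mkRP (lift₁ q) ≠ mkRP (lift₂ q) := by
    rw [hlift₁, hlift₂]
    exact hC.ne_of_mem q.1.1.2 q.1.2.2
  let F (q : U) : OrthoFrame 4 :=
    .gramSchmidt (lift₁ q) (lift₂ q) (sub_inner_smul_ne_zero_of_mkRP_ne (hne q))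
  have hF : Continuous F := OrthoFrame.continuous_gramSchmidt
    ((rpChart u₀).continuousOn_symm.comp_continuous (by fun_prop) fun q => q.2.1)
    ((rpChart v₀).continuousOn_symm.comp_continuous (by fun_prop) fun q => q.2.2) _
  have hL (q : U) : projSpan q.1.1 q.1.2 = projSubspace (F q).plane := by
    rw [OrthoFrame.plane_gramSchmidt, ← projSpan_mkRP, hlift₁, hlift₂]
  exact ⟨U, isOpen_chartDomain u₀ v₀,
    ⟨hu₀ ▸ mkRP_mem_rpChart_target u₀, hv₀ ▸ mkRP_mem_rpChart_target v₀⟩,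
    (linkConfigRestrictHomeo U).trans (frameTrivialization hF hL), fun _ => rfl⟩

end LinkConfig

theorem linkConfig_proj_locally_trivial_general (γ₁ γ₂ : C(Sph 2, RP 3))
    (hdisj : Disjoint (Set.range γ₁) (Set.range γ₂)) :
    ∀ b : (Set.range γ₁) × (Set.range γ₂),
      ∃ U : Set ((Set.range γ₁) × (Set.range γ₂)), IsOpen U ∧ b ∈ U ∧
        ∃ h : {k : LinkConfig (Set.range γ₁) (Set.range γ₂) //
                (k.1.1, k.1.2.2) ∈ U} ≃ₜ U × Sph 2,
          ∀ k, ((h k).1 : (Set.range γ₁) × (Set.range γ₂)) = (k.1.1.1, k.1.1.2.2) :=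
  exists_linkConfig_trivialization hdisj

/-- For disjoint embedded circles `C₁, C₂ ⊆ RP^3`, the projection
`π : K₁ → C₁ × C₂, (x,t,y) ↦ (x,y)` is a locally trivial fibration with fiber the
circle `S¹`: every point of the base has an open neighborhood `U` together with a
homeomorphism `π⁻¹(U) ≃ U × S¹` whose first coordinate is `π`. -/
theorem linkConfig_proj_locally_trivial (γ₁ γ₂ : C(Sph 2, RP 3))
    (hγ₁ : Function.Injective γ₁) (hγ₂ : Function.Injective γ₂)
    (hdisj : Disjoint (Set.range γ₁) (Set.range γ₂)) :
    ∀ b : (Set.range γ₁) × (Set.range γ₂),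
      ∃ U : Set ((Set.range γ₁) × (Set.range γ₂)), IsOpen U ∧ b ∈ U ∧
        ∃ h : {k : LinkConfig (Set.range γ₁) (Set.range γ₂) //
                (k.1.1, k.1.2.2) ∈ U} ≃ₜ U × Sph 2,
          ∀ k, ((h k).1 : (Set.range γ₁) × (Set.range γ₂)) = (k.1.1.1, k.1.1.2.2) :=
  linkConfig_proj_locally_trivial_general γ₁ γ₂ hdisj
end
end
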